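/- Let α ∈ ℝ. For every y ∈ Λ and x ∈ ℝⁿ one has Δ(x+iy) ≠ 0, and the integral J_α(y) = ∫_{ℝⁿ} |Δ(x+iy)|^{−α} dx converges if and only if α > n − 1. Moreover, when α > n − 1 there is a constant C_α, depending only on α and n, such that J_α(y) = C_α Δ(y)^{−α + n/2} for all y ∈ Λ. -/

import Mathlib

/-!
With `B` the Lorentz bilinear form, `Δ(x + iy) = Δ(x) - Δ(y) + 2i B(x, y)`; a zero would give
`B(x, y) = 0` and `Δ(x) = Δ(y) > 0`, which the reverse Cauchy–Schwarz inequality rules out.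

For `y ∈ Λ`, `-√Δ(y)` times a suitable Lorentz reflection is a linear map `T` with `T e₀ = y`,
`B(Tu, Tv) = Δ(y) B(u, v)` and `|det T| = Δ(y)^{n/2}`. Since `|Δ(x + iy)|` only depends on
`Δ(x)`, `Δ(y)` and `B(x, y)`, substituting `x = Tu` gives `J_α(y) = Δ(y)^{n/2 - α} J_α(e₀)`.

In coordinates `x = (t, v) ∈ ℝ × ℝⁿ⁻¹`, `|Δ(x + ie₀)|` lies between `1 + |v|` and `6(1 + |v|)`
for `t ∈ [|v| + 1, |v| + 2]`, and is at least `(1 + |v|)(1 + ||t| - √(1 + |v|²)|) / 5`. Hence the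
`t`-integral of `|Δ(x + ie₀)|^{-α}` is comparable to `(1 + |v|)^{-α}` (from above once `α > 1`),
and `∫ (1 + |v|)^{-α} dv` over `ℝⁿ⁻¹` is finite exactly when `α > n - 1`.
-/

open MeasureTheory Complex Set
open scoped ENNReal

noncomputable section

/-- The Lorentz form `Δ(y) = y₁² − y₂² − ⋯ − yₙ²` on `ℝⁿ`
(written as `2 y₀² − ∑ yᵢ²` with 0-based indexing). -/
def lor {n : ℕ} [NeZero n] (y : Fin n → ℝ) : ℝ := 2 * y 0 ^ 2 - ∑ i, y i ^ 2

/-- The holomorphic extension of the Lorentz form to `ℂⁿ`. -/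
def lorC {n : ℕ} [NeZero n] (z : Fin n → ℂ) : ℂ := 2 * z 0 ^ 2 - ∑ i, z i ^ 2

/-- Componentwise imaginary part. -/
def imP {n : ℕ} (z : Fin n → ℂ) : Fin n → ℝ := fun i => (z i).im

/-- The forward light cone `Λ`. -/
def cone (n : ℕ) [NeZero n] : Set (Fin n → ℝ) := {y | 0 < lor y ∧ 0 < y 0}

/-- The tube domain `T_Λ` over the forward light cone. -/
def tube (n : ℕ) [NeZero n] : Set (Fin n → ℂ) := {z | imP z ∈ cone n}

/-- The weighted measure `dV_ν = Δ(Im z)^{ν − n/2} dz` on `T_Λ`. -/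
def dV (n : ℕ) [NeZero n] (ν : ℝ) : Measure (Fin n → ℂ) :=
  ((volume : Measure (Fin n → ℂ)).restrict (tube n)).withDensity
    (fun z => ENNReal.ofReal (lor (imP z) ^ (ν - (n : ℝ) / 2)))

/-- `∫ |F|^p dV_ν` (as an extended nonnegative real). -/
def lpInt (n : ℕ) [NeZero n] (p ν : ℝ) (F : (Fin n → ℂ) → ℂ) : ℝ≥0∞ :=
  ∫⁻ z, ENNReal.ofReal (‖F z‖ ^ p) ∂(dV n ν)

/-- The `L^p_ν` norm `(∫ |F|^p dV_ν)^{1/p}`. -/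
def lpNorm (n : ℕ) [NeZero n] (p ν : ℝ) (F : (Fin n → ℂ) → ℂ) : ℝ≥0∞ :=
  (lpInt n p ν F) ^ (1 / p)

/-- The Bergman space `A^p_ν`: holomorphic on `T_Λ` and in `L^p_ν`. -/
def memA (n : ℕ) [NeZero n] (p ν : ℝ) (F : (Fin n → ℂ) → ℂ) : Prop :=
  DifferentiableOn ℂ F (tube n) ∧ lpInt n p ν F < ⊤

/-- Partial derivative `∂/∂zᵢ`. -/
def pd {n : ℕ} (i : Fin n) (F : (Fin n → ℂ) → ℂ) : (Fin n → ℂ) → ℂ :=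
  fun z => fderiv ℂ F z (Pi.single i 1)

/-- The wave (Box) operator `□ = −(∂₁² − ∂₂² − ⋯ − ∂ₙ²)`, so that
`□ e^{i z·ξ} = Δ(ξ) e^{i z·ξ}`. -/
def BoxOp {n : ℕ} [NeZero n] (F : (Fin n → ℂ) → ℂ) : (Fin n → ℂ) → ℂ :=
  fun z => -(2 * pd 0 (pd 0 F) z - ∑ i, pd i (pd i F) z)

/-- The (unnormalized) Bergman kernel `B_β(z,w) = Δ((z − w̄)/i)^{−(β+n)}`. -/
def berg (n : ℕ) [NeZero n] (β : ℝ) (z w : Fin n → ℂ) : ℂ :=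
  lorC (fun i => (z i - (starRingEnd ℂ) (w i)) / Complex.I) ^ (-(β + (n : ℝ)) : ℂ)

/-- The Hardy inequality holds for `(p, ν)`:
`∫ |F|^p dV_ν ≤ C ∫ |Δ(Im z) □F(z)|^p dV_ν(z)` for all `F ∈ A^p_ν`. -/
def hardy (n : ℕ) [NeZero n] (p ν : ℝ) : Prop :=
  ∃ C > (0 : ℝ), ∀ F, memA n p ν F →
    lpInt n p ν F ≤ ENNReal.ofReal C *
      lpInt n p ν (fun z => (lor (imP z) : ℂ) * BoxOp F z)

/-- `g` is the orthogonal projection of `f ∈ L²_ν` onto the closed subspace `A²_ν`: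
`g ∈ A²_ν` and `f − g ⊥ A²_ν`. -/
def isProj (n : ℕ) [NeZero n] (ν : ℝ) (f g : (Fin n → ℂ) → ℂ) : Prop :=
  memA n 2 ν g ∧ ∀ h, memA n 2 ν h →
    ∫ z, f z * (starRingEnd ℂ) (h z) ∂(dV n ν) =
      ∫ z, g z * (starRingEnd ℂ) (h z) ∂(dV n ν)

/-- The Bergman projection `P_ν` admits a bounded extension to `L^p_ν`:
`‖P_ν f‖_{L^p_ν} ≤ C ‖f‖_{L^p_ν}` for all `f ∈ L²_ν ∩ L^p_ν`. -/
def projBounded (n : ℕ) [NeZero n] (p ν : ℝ) : Prop :=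
  ∃ C > (0 : ℝ), ∀ f g : (Fin n → ℂ) → ℂ,
    AEStronglyMeasurable f (dV n ν) → lpInt n 2 ν f < ⊤ → lpInt n p ν f < ⊤ →
    isProj n ν f g → lpNorm n p ν g ≤ ENNReal.ofReal C * lpNorm n p ν f

/-- A bounded (continuous) linear functional on `A^p_ν`. -/
def isBddFunc (n : ℕ) [NeZero n] (p ν : ℝ) (γ : ((Fin n → ℂ) → ℂ) → ℂ) : Prop :=
  (∀ F G, memA n p ν F → memA n p ν G → γ (F + G) = γ F + γ G) ∧
  (∀ (c : ℂ) (F), memA n p ν F → γ (fun z => c * F z) = c * γ F) ∧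
  ∃ C : ℝ, ∀ F, memA n p ν F → ‖γ F‖ ≤ C * (lpNorm n p ν F).toReal

section LorentzForm

variable {n : ℕ} [NeZero n]

def lorB : LinearMap.BilinForm ℝ (Fin n → ℝ) :=
  LinearMap.mk₂ ℝ (fun x y => 2 * x 0 * y 0 - ∑ i, x i * y i)
    (fun x x' y => by simp only [Pi.add_apply, add_mul, Finset.sum_add_distrib]; ring)
    (fun c x y => by simp only [Pi.smul_apply, smul_eq_mul, mul_sub, Finset.mul_sum]; ring_nf)
    (fun x y y' => by simp only [Pi.add_apply, mul_add, Finset.sum_add_distrib]; ring)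
    (fun c x y => by simp only [Pi.smul_apply, smul_eq_mul, mul_sub, Finset.mul_sum]; ring_nf)

lemma lorB_apply (x y : Fin n → ℝ) : lorB x y = 2 * x 0 * y 0 - ∑ i, x i * y i := rfl

lemma lorB_comm (x y : Fin n → ℝ) : lorB x y = lorB y x := by
  simp only [lorB_apply, mul_comm (x _)]; ring

lemma lorB_self (x : Fin n → ℝ) : lorB x x = lor x := by
  simp only [lorB_apply, lor, sq, mul_assoc]

lemma lorB_single_zero_right (x : Fin n → ℝ) : lorB x (Pi.single 0 1) = x 0 := by
  simp [lorB_apply, Pi.single_apply, two_mul]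

lemma lorB_single_zero_left (x : Fin n → ℝ) : lorB (Pi.single 0 1) x = x 0 := by
  rw [lorB_comm, lorB_single_zero_right]

lemma lor_single_zero : lor (Pi.single 0 1 : Fin n → ℝ) = 1 := by
  rw [← lorB_self, lorB_single_zero_right, Pi.single_eq_same]

lemma lorC_ofReal_add_mul_I (x y : Fin n → ℝ) :
    lorC (fun i => (x i : ℂ) + (y i : ℂ) * I) =
      ((lor x - lor y : ℝ) : ℂ) + ((2 * lorB x y : ℝ) : ℂ) * I := by
  have hsq (a b : ℝ) :
      ((a : ℂ) + b * I) ^ 2 = ((a ^ 2 - b ^ 2 : ℝ) : ℂ) + ((2 * (a * b) : ℝ) : ℂ) * I := by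
    push_cast; ring_nf; rw [I_sq]; ring
  simp only [lorC, lor, lorB_apply, hsq]
  push_cast
  simp only [Finset.sum_add_distrib, Finset.sum_sub_distrib, ← Finset.sum_mul, ← Finset.mul_sum]
  ring

lemma lor_nonpos_of_lorB_eq_zero {x y : Fin n → ℝ} (hy : y ∈ cone n) (hxy : lorB x y = 0) :
    lor x ≤ 0 := by
  obtain ⟨hy, hy0⟩ := hy
  set S := Finset.univ.erase (0 : Fin n)
  have split (f : Fin n → ℝ) : ∑ i, f i = f 0 + ∑ i ∈ S, f i :=
    (Finset.add_sum_erase _ f (Finset.mem_univ 0)).symm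
  rw [lorB_apply, split] at hxy
  rw [lor, split] at hy ⊢
  have hCS := Finset.sum_mul_sq_le_sq_mul_sq S x y
  have hSx : 0 ≤ ∑ i ∈ S, x i ^ 2 := Finset.sum_nonneg fun i _ => sq_nonneg _
  have hP : x 0 * y 0 = ∑ i ∈ S, x i * y i := by linarith
  have : x 0 ^ 2 * y 0 ^ 2 ≤ (∑ i ∈ S, x i ^ 2) * y 0 ^ 2 :=
    calc x 0 ^ 2 * y 0 ^ 2 = (∑ i ∈ S, x i * y i) ^ 2 := by rw [← hP]; ring
      _ ≤ (∑ i ∈ S, x i ^ 2) * ∑ i ∈ S, y i ^ 2 := hCS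
      _ ≤ (∑ i ∈ S, x i ^ 2) * y 0 ^ 2 := mul_le_mul_of_nonneg_left (by linarith) hSx
  nlinarith [le_of_mul_le_mul_right this (by positivity)]

lemma lorC_ne_zero {y : Fin n → ℝ} (hy : y ∈ cone n) (x : Fin n → ℝ) :
    lorC (fun i => (x i : ℂ) + (y i : ℂ) * I) ≠ 0 := by
  intro h
  rw [lorC_ofReal_add_mul_I] at h
  obtain ⟨hlor, hB⟩ : lor x - lor y = 0 ∧ 2 * lorB x y = 0 := by simpa [Complex.ext_iff] using h
  linarith [lor_nonpos_of_lorB_eq_zero hy (by linarith), hy.1]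

end LorentzForm

section LorentzSimilarity

variable {n : ℕ} [NeZero n]

lemma lorB_isSymm : LinearMap.IsSymm (lorB : LinearMap.BilinForm ℝ (Fin n → ℝ)) :=
  LinearMap.isSymm_def.2 fun x y => lorB_comm x y

def lorentzModulus (x y : Fin n → ℝ) : ℝ := ‖lorC (fun i => (x i : ℂ) + (y i : ℂ) * I)‖

lemma lorentzModulus_nonneg (x y : Fin n → ℝ) : 0 ≤ lorentzModulus x y := norm_nonneg _

lemma lorentzModulus_eq (x y : Fin n → ℝ) :
    lorentzModulus x y = √((lor x - lor y) ^ 2 + (2 * lorB x y) ^ 2) := by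
  rw [lorentzModulus, lorC_ofReal_add_mul_I, norm_add_mul_I]

lemma lorentzModulus_map {T : (Fin n → ℝ) →ₗ[ℝ] (Fin n → ℝ)} {c : ℝ} (hc : 0 ≤ c)
    (hT : ∀ u v, lorB (T u) (T v) = c * lorB u v) (x y : Fin n → ℝ) :
    lorentzModulus (T x) (T y) = c * lorentzModulus x y := by
  have hmul (A : ℝ) : c * √A = √(c ^ 2 * A) := by
    rw [Real.sqrt_mul (sq_nonneg c), Real.sqrt_sq hc]
  simp only [lorentzModulus_eq, ← lorB_self, hT, hmul]
  ring_nf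

lemma LinearMap.abs_det_eq_one_of_comp_self {E : Type*} [AddCommGroup E] [Module ℝ E]
    {f : E →ₗ[ℝ] E} (hf : f ∘ₗ f = LinearMap.id) : |LinearMap.det f| = 1 := by
  have h := congrArg LinearMap.det hf
  rw [LinearMap.det_comp, LinearMap.det_id] at h
  rcases mul_self_eq_one_iff.mp h with h | h <;> simp [h]

/-- The witness is `-√Δ(y)` times the Lorentz reflection in `w = √Δ(y) e₀ + y`, which sends `e₀`
to `-y / √Δ(y)`. -/
lemma exists_lorentz_similarity {y : Fin n → ℝ} (hy : y ∈ cone n) :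
    ∃ T : (Fin n → ℝ) →ₗ[ℝ] (Fin n → ℝ), T (Pi.single 0 1) = y ∧
      (∀ u v, lorB (T u) (T v) = lor y * lorB u v) ∧ |LinearMap.det T| = √(lor y) ^ n := by
  set d := √(lor y)
  have hd : 0 < d := Real.sqrt_pos.2 hy.1
  have hd2 : d ^ 2 = lor y := Real.sq_sqrt hy.1.le
  set w : Fin n → ℝ := d • Pi.single 0 1 + y
  have hw0 : lorB w (Pi.single 0 1) = d + y 0 := by
    simp [w, lorB_single_zero_right]
  have hww : lorB w w = 2 * d * (d + y 0) := by
    simp only [w, map_add, map_smul, LinearMap.add_apply, LinearMap.smul_apply, smul_eq_mul,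
      lorB_single_zero_right, lorB_single_zero_left, lorB_self, lor_single_zero, ← hd2]
    ring
  have hww0 : lorB w w ≠ 0 := by rw [hww]; have := hy.2; positivity
  have hw : LinearMap.IsReflective lorB w :=
    .of_dvd_two _ (isUnit_iff_ne_zero.2 hww0).dvd
  set R := Module.reflection (LinearMap.IsReflective.coroot_apply_self lorB hw)
  have hcoroot : LinearMap.IsReflective.coroot lorB hw (Pi.single 0 1) = d⁻¹ := by
    have h := LinearMap.IsReflective.apply_self_mul_coroot_apply lorB hw (y := Pi.single 0 1)
    rw [hww, hw0] at h
    field_simp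
    nlinarith [h, hy.2]
  have hR0 : R (Pi.single 0 1) = -d⁻¹ • y := by
    rw [Module.reflection_apply, hcoroot]
    simp only [w, smul_add, smul_smul, inv_mul_cancel₀ hd.ne', one_smul]
    module
  refine ⟨(-d) • (R : (Fin n → ℝ) →ₗ[ℝ] (Fin n → ℝ)), ?_, fun u v => ?_, ?_⟩
  · simp [hR0, smul_smul, hd.ne']
  · have hR : lorB (R u) (R v) = lorB u v :=
      LinearMap.IsReflective.isOrthogonal_reflection lorB hw lorB_isSymm u v
    simp only [LinearMap.smul_apply, map_smul, LinearMap.smul_apply, smul_eq_mul,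
      LinearEquiv.coe_coe, hR, ← hd2]
    ring
  · have hRR : (R : (Fin n → ℝ) →ₗ[ℝ] (Fin n → ℝ)) ∘ₗ R = LinearMap.id :=
      LinearMap.ext (Module.involutive_reflection _)
    rw [LinearMap.det_smul, abs_mul, LinearMap.abs_det_eq_one_of_comp_self hRR, abs_pow, abs_neg,
      abs_of_pos hd, Module.finrank_fin_fun, mul_one]

end LorentzSimilarity

lemma lintegral_eq_abs_det_mul_lintegral_comp {E : Type*} [NormedAddCommGroup E]
    [NormedSpace ℝ E] [MeasurableSpace E] [BorelSpace E] [FiniteDimensional ℝ E]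
    (μ : Measure E) [μ.IsAddHaarMeasure] {T : E →ₗ[ℝ] E} (hT : LinearMap.det T ≠ 0)
    {g : E → ℝ≥0∞} (hg : Measurable g) :
    ∫⁻ x, g x ∂μ = ENNReal.ofReal |LinearMap.det T| * ∫⁻ u, g (T u) ∂μ := by
  rw [← lintegral_map hg T.continuous_of_finiteDimensional.measurable,
    Measure.map_linearMap_addHaar_eq_smul_addHaar μ hT, lintegral_smul_measure, smul_eq_mul,
    ← mul_assoc, ← ENNReal.ofReal_mul (abs_nonneg _), ← abs_mul, mul_inv_cancel₀ hT, abs_one,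
    ENNReal.ofReal_one, one_mul]

section Homogeneity

variable {n : ℕ} [NeZero n]

lemma continuous_lorentzModulus_left (y : Fin n → ℝ) : Continuous fun x => lorentzModulus x y := by
  unfold lorentzModulus lorC
  fun_prop

lemma measurable_ofReal_lorentzModulus_rpow (y : Fin n → ℝ) (α : ℝ) :
    Measurable fun x => ENNReal.ofReal (lorentzModulus x y ^ α) :=
  ((continuous_lorentzModulus_left y).measurable.pow_const α).ennreal_ofReal

lemma lintegral_lorentzModulus_rpow_neg {y : Fin n → ℝ} (hy : y ∈ cone n) (α : ℝ) :
    ∫⁻ x, ENNReal.ofReal (lorentzModulus x y ^ (-α)) =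
      ENNReal.ofReal (lor y ^ ((n : ℝ) / 2 - α)) *
        ∫⁻ x : Fin n → ℝ, ENNReal.ofReal (lorentzModulus x (Pi.single 0 1) ^ (-α)) := by
  obtain ⟨T, hTe, hTB, hdet⟩ := exists_lorentz_similarity hy
  have hL := hy.1
  have hdet0 : LinearMap.det T ≠ 0 := by rw [← abs_pos, hdet]; positivity
  have hmod (u : Fin n → ℝ) :
      lorentzModulus (T u) y = lor y * lorentzModulus u (Pi.single 0 1) := by
    simpa only [hTe] using lorentzModulus_map hL.le hTB u (Pi.single 0 1 : Fin n → ℝ)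
  have hpow : √(lor y) ^ n * lor y ^ (-α) = lor y ^ ((n : ℝ) / 2 - α) := by
    rw [Real.sqrt_eq_rpow, ← Real.rpow_natCast, ← Real.rpow_mul hL.le, ← Real.rpow_add hL]
    ring_nf
  rw [lintegral_eq_abs_det_mul_lintegral_comp volume hdet0
    (measurable_ofReal_lorentzModulus_rpow y (-α)), hdet]
  simp_rw [hmod, Real.mul_rpow hL.le (lorentzModulus_nonneg _ _),
    ENNReal.ofReal_mul (Real.rpow_nonneg hL.le _)]
  rw [lintegral_const_mul' _ _ ENNReal.ofReal_ne_top, ← mul_assoc,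
    ← ENNReal.ofReal_mul (by positivity), hpow]

end Homogeneity

lemma rpow_neg_le_mul_rpow_neg {a b c : ℝ} (r : ℝ) (ha : 0 < a) (hab : a ≤ b) (hbc : b ≤ c * a) :
    a ^ (-r) ≤ c ^ |r| * b ^ (-r) := by
  have hc : 1 ≤ c := le_of_mul_le_mul_right (by linarith) ha
  rcases le_or_gt 0 r with hr | hr
  · rw [abs_of_nonneg hr]
    calc a ^ (-r) = c ^ r * (c * a) ^ (-r) := by
          rw [Real.mul_rpow (by positivity) ha.le, ← mul_assoc, ← Real.rpow_add (by positivity),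
            add_neg_cancel, Real.rpow_zero, one_mul]
      _ ≤ c ^ r * b ^ (-r) := mul_le_mul_of_nonneg_left
          (Real.rpow_le_rpow_of_nonpos (ha.trans_le hab) hbc (neg_nonpos.2 hr)) (by positivity)
  · calc a ^ (-r) ≤ b ^ (-r) := Real.rpow_le_rpow ha.le hab (by linarith)
      _ ≤ c ^ |r| * b ^ (-r) :=
        le_mul_of_one_le_left (Real.rpow_nonneg (by linarith) _)
          (Real.one_le_rpow hc (abs_nonneg r))

lemma lintegral_one_add_norm_rpow_neg_lt_top_iff {E : Type*} [NormedAddCommGroup E]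
    [NormedSpace ℝ E] [MeasurableSpace E] [BorelSpace E] [FiniteDimensional ℝ E] [Nontrivial E]
    (μ : Measure E) [μ.IsAddHaarMeasure] {r : ℝ} :
    ∫⁻ x, ENNReal.ofReal ((1 + ‖x‖) ^ (-r)) ∂μ < ∞ ↔ (Module.finrank ℝ E : ℝ) < r := by
  refine ⟨fun h => ?_, finite_integral_one_add_norm⟩
  have hint : Integrable (fun x : E => (1 + ‖x‖) ^ (-r)) μ :=
    ⟨Measurable.aestronglyMeasurable (by fun_prop),
      (hasFiniteIntegral_iff_ofReal (ae_of_all _ fun x => Real.rpow_nonneg (by positivity) _)).2 h⟩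
  rw [integrable_fun_norm_addHaar μ (f := fun y => (1 + y) ^ (-r))] at hint
  have hd : 1 ≤ Module.finrank ℝ E := Module.finrank_pos
  have hpow : IntegrableOn (fun y : ℝ => y ^ ((Module.finrank ℝ E : ℝ) - 1 - r)) (Ioi 1) := by
    refine ((hint.mono_set (Ioi_subset_Ioi zero_le_one)).const_mul (2 ^ |r|)).mono'
      (by fun_prop) ?_
    filter_upwards [ae_restrict_mem measurableSet_Ioi] with y (hy : 1 < y)
    have hy0 : 0 < y := by linarith
    rw [Real.norm_of_nonneg (by positivity), sub_eq_add_neg _ r, Real.rpow_add hy0, smul_eq_mul,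
      mul_left_comm, ← Real.rpow_natCast, Nat.cast_sub hd, Nat.cast_one]
    exact mul_le_mul_of_nonneg_left (rpow_neg_le_mul_rpow_neg r hy0 (by linarith) (by linarith))
      (by positivity)
  linarith [(integrableOn_Ioi_rpow_iff zero_lt_one).1 hpow]

lemma lintegral_comp_abs_sub_le {f : ℝ → ℝ≥0∞} (hf : Measurable f) (s : ℝ) :
    ∫⁻ t, f (|t| - s) ≤ 2 * ∫⁻ t, f t := by
  have hle (t : ℝ) : f (|t| - s) ≤ f (t - s) + f (-s - t) := by
    rcases le_or_gt 0 t with ht | ht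
    · rw [abs_of_nonneg ht]; exact le_self_add
    · rw [abs_of_neg ht, neg_sub_comm]; exact le_add_self
  calc ∫⁻ t, f (|t| - s) ≤ ∫⁻ t, (f (t - s) + f (-s - t)) := lintegral_mono hle
    _ = (∫⁻ t, f t) + ∫⁻ t, f t := by
      rw [lintegral_add_left (f := fun t => f (t - s)) (hf.comp (measurable_sub_const s)),
        lintegral_sub_right_eq_self, lintegral_sub_left_eq_self]
    _ = 2 * ∫⁻ t, f t := (two_mul _).symm

/-- `|Δ(x + i e₀)|` at `x = (t, v)` with `‖v‖ = r`. -/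
def lorentzProfile (r t : ℝ) : ℝ := √((t ^ 2 - r ^ 2 - 1) ^ 2 + (2 * t) ^ 2)

lemma lorentzProfile_mem_Icc {r t : ℝ} (hr : 0 ≤ r) (ht : t ∈ Icc (r + 1) (r + 2)) :
    lorentzProfile r t ∈ Icc (1 + r) (6 * (1 + r)) := by
  obtain ⟨ht1, ht2⟩ := ht
  constructor
  · apply Real.le_sqrt_of_sq_le
    nlinarith [sq_nonneg (t ^ 2 - r ^ 2 - 1)]
  · have h1 : 0 ≤ t ^ 2 - r ^ 2 - 1 := by nlinarith
    have h2 : t ^ 2 - r ^ 2 - 1 ≤ 4 * (1 + r) := by nlinarith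
    refine Real.sqrt_le_iff.2 ⟨by positivity, ?_⟩
    nlinarith [mul_le_mul h2 h2 h1 (by positivity)]

lemma four_mul_sq_mul_one_add_sq_le {u s : ℝ} (hu : 0 ≤ u) (hs : 1 ≤ s) :
    4 * s ^ 2 * (1 + (u - s) ^ 2) ≤ 25 * ((u ^ 2 - s ^ 2) ^ 2 + 4 * u ^ 2) := by
  have hfac : (u ^ 2 - s ^ 2) ^ 2 = (u - s) ^ 2 * (u + s) ^ 2 := by ring
  have hus : s ^ 2 * (u - s) ^ 2 ≤ (u - s) ^ 2 * (u + s) ^ 2 := by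
    nlinarith [mul_le_mul_of_nonneg_left (by nlinarith : s ^ 2 ≤ (u + s) ^ 2) (sq_nonneg (u - s))]
  rcases le_or_gt (s / 2) u with h | h
  · nlinarith
  · have he : s ^ 2 * (s ^ 2 / 4) ≤ s ^ 2 * (u - s) ^ 2 :=
      mul_le_mul_of_nonneg_left (by nlinarith) (sq_nonneg s)
    nlinarith [mul_le_mul_of_nonneg_left (one_le_pow₀ hs : 1 ≤ s ^ 2) (sq_nonneg s)]

lemma one_add_mul_one_add_le_lorentzProfile (r t : ℝ) :
    (1 + r) * (1 + |(|t| - √(1 + r ^ 2))|) ≤ 5 * lorentzProfile r t := by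
  set s := √(1 + r ^ 2)
  set e := |(|t| - s)|
  have hs2 : s ^ 2 = 1 + r ^ 2 := Real.sq_sqrt (by positivity)
  have hs : 1 ≤ s := Real.one_le_sqrt.2 (by nlinarith)
  have hP : (t ^ 2 - r ^ 2 - 1) ^ 2 + (2 * t) ^ 2 = (|t| ^ 2 - s ^ 2) ^ 2 + 4 * |t| ^ 2 := by
    rw [sq_abs, hs2]; ring
  have hr2 : (1 + r) ^ 2 ≤ 2 * s ^ 2 := by nlinarith [sq_nonneg (1 - r)]
  have he2 : (1 + e) ^ 2 ≤ 2 * (1 + (|t| - s) ^ 2) := by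
    rw [← sq_abs (|t| - s)]; nlinarith [sq_nonneg (1 - e)]
  rw [lorentzProfile, hP, ← Real.sqrt_sq (by norm_num : (0 : ℝ) ≤ 5), ← Real.sqrt_mul (by norm_num)]
  refine Real.le_sqrt_of_sq_le ?_
  calc ((1 + r) * (1 + e)) ^ 2 = (1 + r) ^ 2 * (1 + e) ^ 2 := by ring
    _ ≤ (2 * s ^ 2) * (2 * (1 + (|t| - s) ^ 2)) := by gcongr
    _ ≤ 5 ^ 2 * ((|t| ^ 2 - s ^ 2) ^ 2 + 4 * |t| ^ 2) := by
      nlinarith [four_mul_sq_mul_one_add_sq_le (abs_nonneg t) hs]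

lemma ofReal_one_add_rpow_neg_le_lintegral_lorentzProfile {r : ℝ} (hr : 0 ≤ r) (α : ℝ) :
    ENNReal.ofReal ((1 + r) ^ (-α)) ≤
      ENNReal.ofReal (6 ^ |α|) * ∫⁻ t, ENNReal.ofReal (lorentzProfile r t ^ (-α)) :=
  calc ENNReal.ofReal ((1 + r) ^ (-α))
      = ∫⁻ _ in Icc (r + 1) (r + 2), ENNReal.ofReal ((1 + r) ^ (-α)) := by
        rw [setLIntegral_const, Real.volume_Icc]; norm_num
    _ ≤ ∫⁻ t in Icc (r + 1) (r + 2), ENNReal.ofReal (6 ^ |α|) *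
          ENNReal.ofReal (lorentzProfile r t ^ (-α)) := by
        refine setLIntegral_mono' measurableSet_Icc fun t ht => ?_
        obtain ⟨h1, h2⟩ := lorentzProfile_mem_Icc hr ht
        rw [← ENNReal.ofReal_mul (by positivity)]
        exact ENNReal.ofReal_le_ofReal (rpow_neg_le_mul_rpow_neg α (by positivity) h1 h2)
    _ ≤ ∫⁻ t, ENNReal.ofReal (6 ^ |α|) * ENNReal.ofReal (lorentzProfile r t ^ (-α)) :=
        setLIntegral_le_lintegral _ _
    _ = ENNReal.ofReal (6 ^ |α|) * ∫⁻ t, ENNReal.ofReal (lorentzProfile r t ^ (-α)) :=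
        lintegral_const_mul' _ _ ENNReal.ofReal_ne_top

lemma lintegral_lorentzProfile_le {r α : ℝ} (hr : 0 ≤ r) (hα : 0 ≤ α) :
    ∫⁻ t, ENNReal.ofReal (lorentzProfile r t ^ (-α)) ≤
      ENNReal.ofReal (5 ^ α) * (2 * ∫⁻ t : ℝ, ENNReal.ofReal ((1 + ‖t‖) ^ (-α))) *
        ENNReal.ofReal ((1 + r) ^ (-α)) := by
  set f : ℝ → ℝ≥0∞ := fun u => ENNReal.ofReal ((1 + ‖u‖) ^ (-α))
  have hf : Measurable f := by fun_prop
  calc ∫⁻ t, ENNReal.ofReal (lorentzProfile r t ^ (-α))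
      ≤ ∫⁻ t, ENNReal.ofReal (5 ^ α * (1 + r) ^ (-α)) * f (|t| - √(1 + r ^ 2)) := by
        refine lintegral_mono fun t => ?_
        rw [← ENNReal.ofReal_mul (by positivity)]
        refine ENNReal.ofReal_le_ofReal ?_
        have hP := one_add_mul_one_add_le_lorentzProfile r t
        rw [Real.norm_eq_abs]
        calc lorentzProfile r t ^ (-α)
            ≤ ((1 + r) * (1 + |(|t| - √(1 + r ^ 2))|) / 5) ^ (-α) :=
              Real.rpow_le_rpow_of_nonpos (by positivity) (by linarith) (neg_nonpos.2 hα)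
          _ = 5 ^ α * (1 + r) ^ (-α) * (1 + |(|t| - √(1 + r ^ 2))|) ^ (-α) := by
              rw [Real.div_rpow (by positivity) (by norm_num), Real.mul_rpow (by positivity)
                (by positivity), Real.rpow_neg (by norm_num : (0 : ℝ) ≤ 5) α, div_inv_eq_mul]
              ring
    _ ≤ ENNReal.ofReal (5 ^ α * (1 + r) ^ (-α)) * (2 * ∫⁻ t, f t) := by
        rw [lintegral_const_mul' _ _ ENNReal.ofReal_ne_top]
        gcongr
        exact lintegral_comp_abs_sub_le hf _
    _ = ENNReal.ofReal (5 ^ α) * (2 * ∫⁻ t, f t) * ENNReal.ofReal ((1 + r) ^ (-α)) := by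
        rw [ENNReal.ofReal_mul (by positivity)]
        ring

section SplitCoordinates

variable {m : ℕ}

def finConsEuclidean (p : ℝ × EuclideanSpace ℝ (Fin m)) : Fin (m + 1) → ℝ :=
  Fin.cons p.1 (WithLp.ofLp p.2)

lemma measurePreserving_finConsEuclidean : MeasurePreserving (finConsEuclidean (m := m)) := by
  have h : (finConsEuclidean : _ → Fin (m + 1) → ℝ) =
      (MeasurableEquiv.piFinSuccAbove (fun _ => ℝ) 0).symm ∘ Prod.map id WithLp.ofLp := by
    funext p
    simp only [finConsEuclidean, MeasurableEquiv.piFinSuccAbove_symm_apply, Fin.insertNthEquiv_zero,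
      Function.comp_apply]
    rfl
  rw [h]
  exact (volume_preserving_piFinSuccAbove (fun _ => ℝ) 0).symm.comp
    ((MeasurePreserving.id volume).prod (PiLp.volume_preserving_ofLp _))

lemma lorentzModulus_finConsEuclidean (t : ℝ) (v : EuclideanSpace ℝ (Fin m)) :
    lorentzModulus (finConsEuclidean (t, v)) (Pi.single 0 1) = lorentzProfile ‖v‖ t := by
  rw [lorentzModulus_eq, lorentzProfile, lor_single_zero, lorB_single_zero_right, lor,
    Fin.sum_univ_succ, EuclideanSpace.real_norm_sq_eq]
  simp only [finConsEuclidean, Fin.cons_zero, Fin.cons_succ]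
  ring_nf

lemma lintegral_lorentzModulus_single_zero (α : ℝ) :
    ∫⁻ x : Fin (m + 1) → ℝ, ENNReal.ofReal (lorentzModulus x (Pi.single 0 1) ^ (-α)) =
      ∫⁻ v : EuclideanSpace ℝ (Fin m), ∫⁻ t, ENNReal.ofReal (lorentzProfile ‖v‖ t ^ (-α)) := by
  rw [← measurePreserving_finConsEuclidean.lintegral_comp
    (measurable_ofReal_lorentzModulus_rpow _ _), Measure.volume_eq_prod, lintegral_prod_symm]
  · simp only [lorentzModulus_finConsEuclidean]
  · exact ((measurable_ofReal_lorentzModulus_rpow _ _).comp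
      measurePreserving_finConsEuclidean.measurable).aemeasurable

theorem lintegral_lorentzModulus_single_zero_lt_top_iff (hm : 1 ≤ m) (α : ℝ) :
    ∫⁻ x : Fin (m + 1) → ℝ, ENNReal.ofReal (lorentzModulus x (Pi.single 0 1) ^ (-α)) < ∞ ↔
      (m : ℝ) < α := by
  have : Nonempty (Fin m) := ⟨⟨0, hm⟩⟩
  have hJ := lintegral_one_add_norm_rpow_neg_lt_top_iff
    (volume : Measure (EuclideanSpace ℝ (Fin m))) (r := α)
  rw [finrank_euclideanSpace_fin] at hJ
  rw [lintegral_lorentzModulus_single_zero, ← hJ]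
  constructor
  · intro h
    refine (lintegral_mono fun v =>
      ofReal_one_add_rpow_neg_le_lintegral_lorentzProfile (norm_nonneg v) α).trans_lt ?_
    rw [lintegral_const_mul' _ _ ENNReal.ofReal_ne_top]
    exact ENNReal.mul_lt_top ENNReal.ofReal_lt_top h
  · intro h
    have hα : 1 < α := by
      have : (1 : ℝ) ≤ m := by exact_mod_cast hm
      linarith [hJ.1 h]
    have hκ : ∫⁻ t : ℝ, ENNReal.ofReal ((1 + ‖t‖) ^ (-α)) < ∞ :=
      finite_integral_one_add_norm (by simpa using hα)
    refine (lintegral_mono fun v =>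
      lintegral_lorentzProfile_le (norm_nonneg v) (by linarith)).trans_lt ?_
    rw [lintegral_const_mul _ (by fun_prop)]
    exact ENNReal.mul_lt_top (ENNReal.mul_lt_top ENNReal.ofReal_lt_top
      (ENNReal.mul_lt_top ENNReal.ofNat_lt_top hκ)) h

end SplitCoordinates

/-- Lemma: integrability of `|Δ(x+iy)|^{−α}` over `ℝⁿ`. -/
theorem lorentz_integral_Rn (n : ℕ) [NeZero n] (hn : 3 ≤ n) (α : ℝ) :
    (∀ y ∈ cone n, ∀ x : Fin n → ℝ,
        lorC (fun i => (x i : ℂ) + (y i : ℂ) * Complex.I) ≠ 0) ∧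
    (∀ y ∈ cone n,
      (Integrable (fun x : Fin n → ℝ =>
          ‖lorC (fun i => (x i : ℂ) + (y i : ℂ) * Complex.I)‖ ^ (-α)) volume ↔
        (n : ℝ) - 1 < α)) ∧
    ((n : ℝ) - 1 < α → ∃ C : ℝ, ∀ y ∈ cone n,
      (∫ x : Fin n → ℝ,
          ‖lorC (fun i => (x i : ℂ) + (y i : ℂ) * Complex.I)‖ ^ (-α) ∂volume)
        = C * lor y ^ (-α + (n : ℝ) / 2)) := by
  obtain ⟨m, rfl⟩ : ∃ m, n = m + 1 := ⟨n - 1, by omega⟩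
  set J : ℝ≥0∞ := ∫⁻ x : Fin (m + 1) → ℝ, ENNReal.ofReal (lorentzModulus x (Pi.single 0 1) ^ (-α))
  have hJ : J < ∞ ↔ ((m + 1 : ℕ) : ℝ) - 1 < α := by
    rw [Nat.cast_succ, add_sub_cancel_right]
    exact lintegral_lorentzModulus_single_zero_lt_top_iff (by omega) α
  have hnonneg (y : Fin (m + 1) → ℝ) : 0 ≤ᵐ[volume] fun x => lorentzModulus x y ^ (-α) :=
    ae_of_all _ fun x => Real.rpow_nonneg (lorentzModulus_nonneg x y) _
  have hmeas (y : Fin (m + 1) → ℝ) :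
      AEStronglyMeasurable (fun x => lorentzModulus x y ^ (-α)) volume :=
    ((continuous_lorentzModulus_left y).measurable.pow_const _).aestronglyMeasurable
  refine ⟨fun y hy x => lorC_ne_zero hy x, fun y hy => ?_, fun _ => ⟨J.toReal, fun y hy => ?_⟩⟩
  · have hc : ENNReal.ofReal (lor y ^ (((m + 1 : ℕ) : ℝ) / 2 - α)) ≠ 0 :=
      (ENNReal.ofReal_pos.2 (Real.rpow_pos_of_pos hy.1 _)).ne'
    change Integrable (fun x => lorentzModulus x y ^ (-α)) volume ↔ _
    rw [← hJ, Integrable, and_iff_right (hmeas y), hasFiniteIntegral_iff_ofReal (hnonneg y),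
      lintegral_lorentzModulus_rpow_neg hy]
    exact ⟨fun h => ENNReal.lt_top_of_mul_ne_top_right h.ne hc,
      ENNReal.mul_lt_top ENNReal.ofReal_lt_top⟩
  · change ∫ x, lorentzModulus x y ^ (-α) = _
    rw [integral_eq_lintegral_of_nonneg_ae (hnonneg y) (hmeas y),
      lintegral_lorentzModulus_rpow_neg hy, ENNReal.toReal_mul,
      ENNReal.toReal_ofReal (Real.rpow_nonneg hy.1.le _), neg_add_eq_sub, mul_comm]
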